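/- Let n ≥ 3 and consider the financial network with banks v_1,…,v_n, all external assets 0, liabilities l_{v_{i+1}, v_i} = 1 for i = 1,…,n−1 (all others 0), no default costs (α = β = 1), and budget M = 1, where for every strategy profile the regulator injects the entire budget into the defaulting bank with the highest threat index of the modified network, breaking ties in favor of the lowest index (and into v_1 if no bank is in default). Then: (i) under the profile in which no edges are removed, the budget is injected into v_n and the resulting systemic liquidity is n−1; (ii) the profile in which each bank v_i for 2 ≤ i ≤ n−1 removes its incoming edge (v_{i+1}, v_i) and v_1 keeps its incoming edge (v_2, v_1) is a pure Nash equilibrium whose systemic liquidity is 1. Consequently, the Effect of Anarchy of edge-removal games with cash injections is at least n−1. -/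

import Mathlib

open Finset

/-- `p` is a proportional clearing payment matrix for the network with external assets `e`,
liabilities `l` and default costs `α, β`. -/
def IsClearing {ι : Type*} [Fintype ι] (α β : ℝ) (e : ι → ℝ) (l : ι → ι → ℝ)
    (p : ι → ι → ℝ) : Prop :=
  (∀ i j, 0 ≤ p i j) ∧ (∀ i j, p i j ≤ l i j) ∧
  (∀ i, (∑ j, l i j) ≤ e i + (∑ j, p j i) → ∀ j, p i j = l i j) ∧
  (∀ i, e i + (∑ j, p j i) < (∑ j, l i j) →
    ∀ j, p i j = (α * e i + β * (∑ k, p k i)) * l i j / (∑ k, l i k))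

/-- `p` is the maximal clearing payment matrix. -/
def IsMaxClearing {ι : Type*} [Fintype ι] (α β : ℝ) (e : ι → ℝ) (l p : ι → ι → ℝ) : Prop :=
  IsClearing α β e l p ∧ ∀ q, IsClearing α β e l q → ∀ i j, q i j ≤ p i j

/-- Systemic liquidity: the sum of all payments. -/
def liquidity {ι : Type*} [Fintype ι] (p : ι → ι → ℝ) : ℝ := ∑ i, ∑ j, p i j

/-- Total assets of bank `i` under payments `p`. -/
def assets {ι : Type*} [Fintype ι] (e : ι → ℝ) (p : ι → ι → ℝ) (i : ι) : ℝ :=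
  e i + ∑ j, p j i

/-- The liabilities obtained from `l` when each bank `j` removes the incoming edges from
the banks in `s j`. -/
def removeEdges {ι : Type*} [DecidableEq ι] (l : ι → ι → ℝ) (s : ι → Finset ι) :
    ι → ι → ℝ :=
  fun i j => if i ∈ s j then 0 else l i j

/-- The set of banks in default under payments `p`. -/
def Defaulting {ι : Type*} [Fintype ι] (e : ι → ℝ) (l p : ι → ι → ℝ) : Set ι :=
  {i | e i + (∑ j, p j i) < ∑ j, l i j}

/-- `μ` is the threat-index vector for the network `(e, l)` with payments `p`. -/
def IsThreatIndex {ι : Type*} [Fintype ι] (e : ι → ℝ) (l p : ι → ι → ℝ) (μ : ι → ℝ) :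
    Prop :=
  (∀ i, i ∉ Defaulting e l p → μ i = 0) ∧
  (∀ i, i ∈ Defaulting e l p →
    μ i = 1 + ∑ j, Set.indicator (Defaulting e l p)
      (fun j' => l i j' / (∑ k, l i k) * μ j') j)

/-- The regulator's injection rule: the budget goes to the defaulting bank with the
highest threat index, ties broken in favor of the lowest index; to bank `0` (v₁) if no
bank is in default. -/
def TargetSpec {n : ℕ} (e : Fin n → ℝ) (l p : Fin n → Fin n → ℝ) (μ : Fin n → ℝ)
    (b : Fin n) : Prop :=
  (Defaulting e l p = ∅ → (b : ℕ) = 0) ∧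
  (Defaulting e l p ≠ ∅ →
    b ∈ Defaulting e l p ∧ (∀ i ∈ Defaulting e l p, μ i ≤ μ b) ∧
    (∀ i ∈ Defaulting e l p, μ i = μ b → b ≤ i))

/-!
Before the injection nobody has cash, and the path network is acyclic, so the maximal
clearing payments vanish: bank `k` defaults iff it still owes to bank `k - 1`, and its threat
index is one more than that of its creditor. In the full path the threat index of bank `k` is
`k`, so the budget goes to the last bank and then flows down the whole path. In the
equilibrium profile only the edge from bank `1` to bank `0` survives. A deviating bank `j` can
only restore its own incoming edge from bank `j + 1`, which has no debtor left, so bank `j`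
receives at most the cash injected into bank `j + 1`. Banks `0` and `1` already hold the whole
budget; for `j ≥ 2` no two surviving edges are consecutive, all threat indices are `1`, the
tie-break sends the budget to bank `1`, and bank `j` is left with nothing.
-/

section Clearing

variable {ι : Type*} [Fintype ι] {α β : ℝ} {e : ι → ℝ} {l p P : ι → ι → ℝ}

theorem IsClearing.liabilities_nonneg (hp : IsClearing α β e l p) (i j : ι) : 0 ≤ l i j :=
  (hp.1 i j).trans (hp.2.1 i j)

theorem IsClearing.apply_eq_zero_of_liability (hp : IsClearing α β e l p) {i j : ι}
    (h : l i j = 0) : p i j = 0 :=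
  le_antisymm (h ▸ hp.2.1 i j) (hp.1 i j)

theorem IsClearing.apply_le_assets (hp : IsClearing 1 1 e l p) {i : ι} (he : 0 ≤ e i)
    (j : ι) : p i j ≤ e i + ∑ k, p k i := by
  have hassets : 0 ≤ e i + ∑ k, p k i := add_nonneg he (sum_nonneg fun k _ => hp.1 k i)
  have hlij : l i j ≤ ∑ k, l i k :=
    single_le_sum (fun k _ => hp.liabilities_nonneg i k) (mem_univ j)
  by_cases hsolv : ∑ k, l i k ≤ e i + ∑ k, p k i
  · rw [hp.2.2.1 i hsolv j]
    exact hlij.trans hsolv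
  · replace hsolv := not_le.1 hsolv
    rw [hp.2.2.2 i hsolv j, one_mul, one_mul, mul_div_assoc]
    exact mul_le_of_le_one_right hassets ((div_le_one (hassets.trans_lt hsolv)).2 hlij)

theorem IsClearing.apply_le_of_no_debtors (hp : IsClearing 1 1 e l p) {k : ι} (he : 0 ≤ e k)
    (hk : ∀ m, l m k = 0) (j : ι) : p k j ≤ e k := by
  simpa [fun m => hp.apply_eq_zero_of_liability (hk m)] using hp.apply_le_assets he j

theorem IsClearing.eq_zero_of_acyclic [LinearOrder ι] [WellFoundedGT ι]
    (hp : IsClearing 1 1 (fun _ => 0) l p) (hl : ∀ i j, l i j ≠ 0 → j < i) :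
    p = fun _ _ => 0 := by
  funext i
  induction i using WellFoundedGT.induction with
  | _ i ih =>
    have hinflow : ∑ k, p k i = 0 := sum_eq_zero fun k _ => by
      by_cases h : l k i = 0
      · exact hp.apply_eq_zero_of_liability h
      · exact congrFun (ih k (hl k i h)) i
    funext j
    refine le_antisymm ?_ (hp.1 i j)
    simpa [hinflow] using hp.apply_le_assets (i := i) le_rfl j

theorem IsClearing.assets_le_sum (hp : IsClearing 1 1 e l p) (he : ∀ i, 0 ≤ e i) {j : ι}
    (hjj : l j j = 0) (hdebtors : ∀ k, l k j ≠ 0 → ∀ m, l m k = 0) :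
    assets e p j ≤ ∑ k, e k := by
  classical
  have hterm : ∀ k, p k j + (if k = j then e j else 0) ≤ e k := by
    intro k
    by_cases hkj : k = j
    · subst hkj
      simp [hp.apply_eq_zero_of_liability hjj]
    · rw [if_neg hkj, add_zero]
      by_cases hl : l k j = 0
      · exact (hp.apply_eq_zero_of_liability hl).trans_le (he k)
      · exact hp.apply_le_of_no_debtors (he k) (hdebtors k hl) j
  calc assets e p j = ∑ k, (p k j + if k = j then e j else 0) := by
        rw [sum_add_distrib, sum_ite_eq', if_pos (mem_univ j), assets, add_comm]
    _ ≤ ∑ k, e k := sum_le_sum fun k _ => hterm k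

theorem IsClearing.assets_eq_zero (hp : IsClearing 1 1 e l p) {j : ι} (hj : e j = 0)
    (hdebtors : ∀ k, l k j ≠ 0 → e k = 0 ∧ ∀ m, l m k = 0) : assets e p j = 0 := by
  rw [assets, hj, zero_add]
  refine sum_eq_zero fun k _ => ?_
  by_cases hl : l k j = 0
  · exact hp.apply_eq_zero_of_liability hl
  · obtain ⟨hek, hk⟩ := hdebtors k hl
    exact le_antisymm (hek ▸ hp.apply_le_of_no_debtors hek.ge hk j) (hp.1 k j)

theorem IsMaxClearing.eq_liabilities_of_solvent (hP : IsMaxClearing α β e l P)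
    (h : ∀ i, ∑ j, l i j ≤ e i + ∑ j, l j i) : P = l := by
  have hl : IsClearing α β e l l :=
    ⟨hP.1.liabilities_nonneg, fun _ _ => le_rfl, fun _ _ _ => rfl,
      fun i hi => absurd (h i) (not_le.2 hi)⟩
  funext i j
  exact le_antisymm (hP.1.2.1 i j) (hP.2 l hl i j)

theorem mem_defaulting_zero_iff (hl : ∀ i j, 0 ≤ l i j) {i : ι} :
    i ∈ Defaulting (fun _ => 0) l (fun _ _ => 0) ↔ ∃ j, l i j ≠ 0 := by
  simp only [Defaulting, Set.mem_ofPred_eq, sum_const_zero, add_zero,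
    sum_pos_iff_of_nonneg fun j _ => hl i j, mem_univ, true_and]
  exact exists_congr fun j => (hl i j).lt_iff_ne'

theorem IsThreatIndex.eq_one_add_of_single_creditor {μ : ι → ℝ}
    (hμ : IsThreatIndex e l p μ) {i c : ι} (hi : i ∈ Defaulting e l p)
    (hc : l i c ≠ 0) (hother : ∀ j, j ≠ c → l i j = 0) : μ i = 1 + μ c := by
  have hrow : ∑ k, l i k = l i c := sum_eq_single c (fun j _ hj => hother j hj) (by simp)
  rw [hμ.2 i hi, sum_eq_single c (fun j _ hj => by simp [hother j hj]) (by simp)]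
  by_cases hcD : c ∈ Defaulting e l p
  · rw [Set.indicator_of_mem hcD, hrow, div_self hc, one_mul]
  · rw [Set.indicator_of_notMem hcD, hμ.1 c hcD]

theorem liquidity_eq_of_single {a c : ι} (h : ∀ i j, p i j ≠ 0 → i = a ∧ j = c) :
    liquidity p = p a c := by
  have hrow : ∀ i, i ≠ a → ∑ j, p i j = 0 := fun i hi =>
    sum_eq_zero fun j _ => by_contra fun hne => hi (h i j hne).1
  rw [liquidity, sum_eq_single a (fun i _ hi => hrow i hi) (by simp),
    sum_eq_single c (fun j _ hj => by_contra fun hne => hj (h a j hne).2) (by simp)]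

end Clearing

theorem TargetSpec.le_of_threat_eq {n : ℕ} {e : Fin n → ℝ} {l p : Fin n → Fin n → ℝ}
    {μ : Fin n → ℝ} {b c : Fin n} (hb : TargetSpec e l p μ b) (hc : c ∈ Defaulting e l p)
    (hconst : ∀ i ∈ Defaulting e l p, μ i = μ c) : b ≤ c := by
  obtain ⟨hbD, -, htie⟩ := hb.2 (Set.nonempty_of_mem hc).ne_empty
  exact htie c hc (hconst b hbD).symm

section PathNetwork

variable {n : ℕ}

def pathLiabilities (n : ℕ) : Fin n → Fin n → ℝ :=
  fun i j => if (i : ℕ) = (j : ℕ) + 1 then 1 else 0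

def nashProfile (n : ℕ) : Fin n → Finset (Fin n) := fun j =>
  if h : 1 ≤ (j : ℕ) ∧ (j : ℕ) + 2 ≤ n
  then {⟨(j : ℕ) + 1, Nat.lt_of_lt_of_le (Nat.lt_succ_self _) h.2⟩} else ∅

theorem mem_nashProfile {i k : Fin n} :
    i ∈ nashProfile n k ↔ 1 ≤ (k : ℕ) ∧ (i : ℕ) = k + 1 := by
  unfold nashProfile
  split_ifs with h
  · simp only [mem_singleton, Fin.ext_iff]
    omega
  · simp only [notMem_empty, false_iff]
    omega

theorem removeEdges_path_apply (s : Fin n → Finset (Fin n)) (i k : Fin n) :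
    removeEdges (pathLiabilities n) s i k = if (i : ℕ) = k + 1 ∧ i ∉ s k then 1 else 0 := by
  unfold removeEdges pathLiabilities
  split_ifs <;> tauto

theorem removeEdges_path_nonneg (s : Fin n → Finset (Fin n)) (i k : Fin n) :
    0 ≤ removeEdges (pathLiabilities n) s i k := by
  rw [removeEdges_path_apply]
  split_ifs <;> norm_num

theorem removeEdges_path_ne_zero_iff {s : Fin n → Finset (Fin n)} {i k : Fin n} :
    removeEdges (pathLiabilities n) s i k ≠ 0 ↔ (i : ℕ) = k + 1 ∧ i ∉ s k := by
  rw [removeEdges_path_apply]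
  split_ifs with h
  · simpa
  · simpa using h

theorem removeEdges_path_eq_zero_of_ne {s : Fin n → Finset (Fin n)} {i c k : Fin n}
    (hc : removeEdges (pathLiabilities n) s i c ≠ 0) (hk : k ≠ c) :
    removeEdges (pathLiabilities n) s i k = 0 := by
  by_contra h
  rw [← ne_eq, removeEdges_path_ne_zero_iff] at h
  rw [removeEdges_path_ne_zero_iff] at hc
  exact hk (Fin.ext (by omega))

theorem sum_removeEdges_path_le_one (s : Fin n → Finset (Fin n)) (i : Fin n) :
    ∑ k, removeEdges (pathLiabilities n) s i k ≤ 1 := by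
  by_cases h : ∃ c, removeEdges (pathLiabilities n) s i c ≠ 0
  · obtain ⟨c, hc⟩ := h
    rw [sum_eq_single c (fun k _ hk => removeEdges_path_eq_zero_of_ne hc hk) (by simp),
      removeEdges_path_apply]
    split_ifs <;> norm_num
  · rw [sum_eq_zero fun k _ => not_not.1 (not_exists.1 h k)]
    exact zero_le_one

theorem removeEdges_path_acyclic (s : Fin n → Finset (Fin n)) (i k : Fin n)
    (h : removeEdges (pathLiabilities n) s i k ≠ 0) : k < i := by
  rw [removeEdges_path_ne_zero_iff] at h
  rw [Fin.lt_def]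
  omega

theorem removeEdges_deviation_ne_zero {j : Fin n} {s : Fin n → Finset (Fin n)}
    (hs : ∀ k, k ≠ j → s k = nashProfile n k) {i k : Fin n}
    (h : removeEdges (pathLiabilities n) s i k ≠ 0) :
    (i : ℕ) = k + 1 ∧ ((k : ℕ) = 0 ∨ k = j) := by
  rw [removeEdges_path_ne_zero_iff] at h
  refine ⟨h.1, ?_⟩
  by_cases hkj : k = j
  · exact Or.inr hkj
  · rw [hs k hkj, mem_nashProfile] at h
    omega

end PathNetwork

section InjectionGame

variable {n : ℕ}

theorem threatIndex_removeEdges_empty {μ : Fin n → ℝ}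
    (hμ : IsThreatIndex (fun _ => 0) (removeEdges (pathLiabilities n) fun _ => ∅)
      (fun _ _ => 0) μ) (i : Fin n) : μ i = i := by
  obtain ⟨m, hm⟩ : ∃ m, (i : ℕ) = m := ⟨_, rfl⟩
  induction m generalizing i with
  | zero =>
    have hi : i ∉ Defaulting (fun _ => 0) (removeEdges (pathLiabilities n) fun _ => ∅)
        (fun _ _ => 0) := by
      simp [mem_defaulting_zero_iff (removeEdges_path_nonneg _), removeEdges_path_ne_zero_iff,
        hm]
    simp [hμ.1 i hi, hm]
  | succ m ih =>
    let c : Fin n := ⟨m, by omega⟩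
    have hc : removeEdges (pathLiabilities n) (fun _ => ∅) i c ≠ 0 := by
      simp [removeEdges_path_ne_zero_iff, c, hm]
    have hi := (mem_defaulting_zero_iff (removeEdges_path_nonneg _)).2 ⟨c, hc⟩
    rw [hμ.eq_one_add_of_single_creditor hi hc fun k hk => removeEdges_path_eq_zero_of_ne hc hk,
      ih c rfl, hm]
    push_cast
    ring

theorem target_removeEdges_empty (hn : 2 ≤ n) {μ : Fin n → ℝ} {b : Fin n}
    (hμ : IsThreatIndex (fun _ => 0) (removeEdges (pathLiabilities n) fun _ => ∅)
      (fun _ _ => 0) μ)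
    (hb : TargetSpec (fun _ => 0) (removeEdges (pathLiabilities n) fun _ => ∅)
      (fun _ _ => 0) μ b) : (b : ℕ) = n - 1 := by
  let last : Fin n := ⟨n - 1, by omega⟩
  have hlast : last ∈ Defaulting (fun _ => 0) (removeEdges (pathLiabilities n) fun _ => ∅)
      (fun _ _ => 0) :=
    (mem_defaulting_zero_iff (removeEdges_path_nonneg _)).2
      ⟨⟨n - 2, by omega⟩, by simp [removeEdges_path_ne_zero_iff, last]; omega⟩
  obtain ⟨-, hmax, -⟩ := hb.2 (Set.nonempty_of_mem hlast).ne_empty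
  have hle := hmax last hlast
  rw [threatIndex_removeEdges_empty hμ, threatIndex_removeEdges_empty hμ] at hle
  have : n - 1 ≤ (b : ℕ) := by exact_mod_cast hle
  omega

theorem one_le_sum_removeEdges_empty {i : Fin n} (hi : (i : ℕ) + 1 < n) :
    1 ≤ ∑ m, removeEdges (pathLiabilities n) (fun _ => ∅) m i := by
  have hpaid : removeEdges (pathLiabilities n) (fun _ => ∅) ⟨i + 1, hi⟩ i = 1 := by
    simp [removeEdges_path_apply]
  exact hpaid.symm.le.trans
    (single_le_sum (fun m _ => removeEdges_path_nonneg _ m i) (mem_univ _))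

theorem removeEdges_nashProfile_ne_zero_iff {i k : Fin n} :
    removeEdges (pathLiabilities n) (nashProfile n) i k ≠ 0 ↔
      (i : ℕ) = 1 ∧ (k : ℕ) = 0 := by
  rw [removeEdges_path_ne_zero_iff, mem_nashProfile]
  omega

theorem target_nashProfile (hn : 2 ≤ n) {μ : Fin n → ℝ} {b : Fin n}
    (hb : TargetSpec (fun _ => 0) (removeEdges (pathLiabilities n) (nashProfile n))
      (fun _ _ => 0) μ b) : (b : ℕ) = 1 := by
  have hD := fun i => mem_defaulting_zero_iff (removeEdges_path_nonneg (nashProfile n)) (i := i)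
  have hone := (hD ⟨1, by omega⟩).2
    ⟨⟨0, by omega⟩, removeEdges_nashProfile_ne_zero_iff.2 ⟨rfl, rfl⟩⟩
  obtain ⟨k, hk⟩ := (hD b).1 (hb.2 (Set.nonempty_of_mem hone).ne_empty).1
  exact (removeEdges_nashProfile_ne_zero_iff.1 hk).1

theorem liquidity_removeEdges_nashProfile (hn : 2 ≤ n) :
    liquidity (removeEdges (pathLiabilities n) (nashProfile n)) = 1 := by
  rw [liquidity_eq_of_single (a := ⟨1, by omega⟩) (c := ⟨0, by omega⟩) fun i k h => by
    simpa [Fin.ext_iff] using removeEdges_nashProfile_ne_zero_iff.1 h]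
  simp [removeEdges_path_apply, mem_nashProfile]

theorem liquidity_removeEdges_empty (hn : 1 ≤ n) :
    liquidity (removeEdges (pathLiabilities n) fun _ => ∅) = n - 1 := by
  obtain ⟨m, rfl⟩ := Nat.exists_eq_add_of_le' hn
  have hcreditor : ∀ i : Fin m, #{k : Fin (m + 1) | (i : ℕ) = k} = 1 := fun i =>
    card_eq_one.2 ⟨i.castSucc, by ext; simp [Fin.ext_iff, eq_comm]⟩
  rw [liquidity, Fin.sum_univ_succ]
  simp [removeEdges_path_apply, hcreditor]

theorem target_le_one_of_deviation {j : Fin n} (hj : 2 ≤ (j : ℕ)) {s : Fin n → Finset (Fin n)}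
    (hs : ∀ k, k ≠ j → s k = nashProfile n k) {μ : Fin n → ℝ} {b : Fin n}
    (hμ : IsThreatIndex (fun _ => 0) (removeEdges (pathLiabilities n) s) (fun _ _ => 0) μ)
    (hb : TargetSpec (fun _ => 0) (removeEdges (pathLiabilities n) s) (fun _ _ => 0) μ b) :
    (b : ℕ) ≤ 1 := by
  set D := Defaulting (fun _ => 0) (removeEdges (pathLiabilities n) s) (fun _ _ => 0)
  have hD : ∀ i, i ∈ D ↔ ∃ k, removeEdges (pathLiabilities n) s i k ≠ 0 := fun i =>
    mem_defaulting_zero_iff (removeEdges_path_nonneg s)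
  let zero : Fin n := ⟨0, by omega⟩
  let one : Fin n := ⟨1, by omega⟩
  have hone : one ∈ D := by
    refine (hD one).2 ⟨zero, removeEdges_path_ne_zero_iff.2 ⟨rfl, ?_⟩⟩
    rw [hs zero (fun h => by simp [zero, Fin.ext_iff] at h; omega), mem_nashProfile]
    simp [zero]
  -- no two consecutive edges survive the deviation, so no defaulting bank owes a defaulting bank
  have hμD : ∀ i ∈ D, μ i = 1 := by
    intro i hi
    obtain ⟨c, hc⟩ := (hD i).1 hi
    have hcD : c ∉ D := by
      rintro hcD
      obtain ⟨c', hc'⟩ := (hD c).1 hcD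
      have h₁ := removeEdges_deviation_ne_zero hs hc
      have h₂ := removeEdges_deviation_ne_zero hs hc'
      simp only [Fin.ext_iff] at h₁ h₂
      omega
    rw [hμ.eq_one_add_of_single_creditor hi hc fun k hk => removeEdges_path_eq_zero_of_ne hc hk,
      hμ.1 c hcD, add_zero]
  exact hb.le_of_threat_eq hone fun i hi => by rw [hμD i hi, hμD one hone]

theorem IsMaxClearing.eq_removeEdges_path {s : Fin n → Finset (Fin n)} {b : Fin n}
    {P : Fin n → Fin n → ℝ}
    (hP : IsMaxClearing 1 1 (fun i => if i = b then 1 else 0)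
      (removeEdges (pathLiabilities n) s) P)
    (howed : ∀ i k, removeEdges (pathLiabilities n) s i k ≠ 0 → i ≠ b →
      1 ≤ ∑ m, removeEdges (pathLiabilities n) s m i) :
    P = removeEdges (pathLiabilities n) s := by
  refine hP.eq_liabilities_of_solvent fun i => ?_
  have hcash : (0 : ℝ) ≤ if i = b then 1 else 0 := by split_ifs <;> norm_num
  have hinflow := sum_nonneg fun m (_ : m ∈ univ) => removeEdges_path_nonneg s m i
  by_cases hdebt : ∃ k, removeEdges (pathLiabilities n) s i k ≠ 0
  · obtain ⟨k, hk⟩ := hdebt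
    refine (sum_removeEdges_path_le_one s i).trans ?_
    by_cases hib : i = b
    · rw [if_pos hib]
      linarith
    · rw [if_neg hib, zero_add]
      exact howed i k hk hib
  · rw [sum_eq_zero fun k _ => not_not.1 (not_exists.1 hdebt k)]
    exact add_nonneg hcash hinflow

theorem one_le_assets_nashProfile (hn : 2 ≤ n) {b j : Fin n} (hb : (b : ℕ) = 1)
    (hj : (j : ℕ) ≤ 1) :
    1 ≤ assets (fun i => if i = b then 1 else 0)
      (removeEdges (pathLiabilities n) (nashProfile n)) j := by
  have hinflow := sum_nonneg fun k (_ : k ∈ univ) =>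
    removeEdges_path_nonneg (nashProfile n) k j
  rw [assets]
  obtain hj | hj : (j : ℕ) = 1 ∨ (j : ℕ) = 0 := by omega
  · rw [if_pos (Fin.ext (hj.trans hb.symm))]
    linarith
  · have hpaid : removeEdges (pathLiabilities n) (nashProfile n) ⟨1, by omega⟩ j = 1 := by
      simp [removeEdges_path_apply, mem_nashProfile, hj]
    have := single_le_sum (fun k (_ : k ∈ univ) => removeEdges_path_nonneg (nashProfile n) k j)
      (mem_univ ⟨1, by omega⟩)
    rw [if_neg fun h => by simp [Fin.ext_iff] at h; omega]
    linarith

theorem assets_deviation_le (hn : 2 ≤ n) {j : Fin n} {s : Fin n → Finset (Fin n)}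
    (hs : ∀ k, k ≠ j → s k = nashProfile n k) {μ : Fin n → ℝ} {b b' : Fin n}
    {P : Fin n → Fin n → ℝ}
    (hμ : IsThreatIndex (fun _ => 0) (removeEdges (pathLiabilities n) s) (fun _ _ => 0) μ)
    (hb : TargetSpec (fun _ => 0) (removeEdges (pathLiabilities n) s) (fun _ _ => 0) μ b)
    (hP : IsClearing 1 1 (fun i => if i = b then 1 else 0)
      (removeEdges (pathLiabilities n) s) P)
    (hb' : (b' : ℕ) = 1) :
    assets (fun i => if i = b then 1 else 0) P j ≤
      assets (fun i => if i = b' then 1 else 0)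
        (removeEdges (pathLiabilities n) (nashProfile n)) j := by
  have hdebtors : ∀ k, removeEdges (pathLiabilities n) s k j ≠ 0 →
      ∀ m, removeEdges (pathLiabilities n) s m k = 0 := by
    intro k hk m
    by_contra hmk
    have h₁ := removeEdges_deviation_ne_zero hs hk
    have h₂ := removeEdges_deviation_ne_zero hs hmk
    simp only [Fin.ext_iff] at h₁ h₂
    omega
  by_cases hj : (j : ℕ) ≤ 1
  · have hjj : removeEdges (pathLiabilities n) s j j = 0 := by simp [removeEdges_path_apply]
    calc _ ≤ ∑ k, if k = b then (1 : ℝ) else 0 :=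
          hP.assets_le_sum (fun i => by split_ifs <;> norm_num) hjj hdebtors
      _ = 1 := by simp
      _ ≤ _ := one_le_assets_nashProfile hn hb' hj
  · have hb1 := target_le_one_of_deviation (by omega) hs hμ hb
    have hcash : ∀ k : Fin n, 2 ≤ (k : ℕ) → (if k = b then (1 : ℝ) else 0) = 0 :=
      fun k hk => if_neg fun h => by rw [h] at hk; omega
    rw [hP.assets_eq_zero (hcash j (by omega)) fun k hk =>
      ⟨hcash k (by have := (removeEdges_deviation_ne_zero hs hk).1; omega), hdebtors k hk⟩]
    exact add_nonneg (by dsimp only; split_ifs <;> norm_num)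
      (sum_nonneg fun k _ => removeEdges_path_nonneg (nashProfile n) k j)

end InjectionGame

/-- The path network on `n ≥ 3` banks (bank `i-1` is vᵢ): no external assets, liabilities
`l_{v_{i+1}, v_i} = 1`, budget `M = 1`, no default costs, with the regulator's injection
rule.  (i) With no removals the budget goes to vₙ and the liquidity is `n-1`;
(ii) the profile where each vᵢ, `2 ≤ i ≤ n-1`, removes its incoming edge and v₁ keeps its
incoming edge is a pure Nash equilibrium with liquidity 1.  Hence the Effect of Anarchy
of edge-removal games with cash injections is at least `n-1`. -/
theorem injection_game_effect_of_anarchy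
    (n : ℕ) (hn : 3 ≤ n)
    (e : Fin n → ℝ) (he : e = fun _ => 0)
    (l : Fin n → Fin n → ℝ)
    (hl : l = fun (i j : Fin n) => if (i : ℕ) = (j : ℕ) + 1 then 1 else 0)
    (M : ℝ) (hM : M = 1)
    (P₀ Pay : (Fin n → Finset (Fin n)) → Fin n → Fin n → ℝ)
    (μ : (Fin n → Finset (Fin n)) → Fin n → ℝ)
    (b : (Fin n → Finset (Fin n)) → Fin n)
    (hP₀ : ∀ s, IsMaxClearing 1 1 e (removeEdges l s) (P₀ s))
    (hμ : ∀ s, IsThreatIndex e (removeEdges l s) (P₀ s) (μ s))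
    (hb : ∀ s, TargetSpec e (removeEdges l s) (P₀ s) (μ s) (b s))
    (hPay : ∀ s, IsMaxClearing 1 1
      (fun i => e i + if i = b s then M else 0) (removeEdges l s) (Pay s))
    (sstar : Fin n → Finset (Fin n))
    (hsstar : sstar = fun (j : Fin n) =>
      if h : 1 ≤ (j : ℕ) ∧ (j : ℕ) + 2 ≤ n
      then {(⟨(j : ℕ) + 1, by omega⟩ : Fin n)} else ∅) :
    -- (i) with no removals the budget goes to vₙ and the liquidity is n-1
    ((b (fun _ => (∅ : Finset (Fin n))) : ℕ) = n - 1 ∧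
      liquidity (Pay (fun _ => (∅ : Finset (Fin n)))) = (n : ℝ) - 1)
    -- (ii) sstar is a pure Nash equilibrium with liquidity 1
    ∧ (∀ (j : Fin n) (R : Finset (Fin n)),
        assets (fun i => e i + if i = b (Function.update sstar j R) then M else 0)
            (Pay (Function.update sstar j R)) j
          ≤ assets (fun i => e i + if i = b sstar then M else 0) (Pay sstar) j)
    ∧ liquidity (Pay sstar) = 1 := by
  subst he hM
  obtain rfl : l = pathLiabilities n := hl
  obtain rfl : sstar = nashProfile n := hsstar
  simp only [zero_add] at hPay ⊢
  have hP₀ : ∀ s, P₀ s = fun _ _ => 0 := fun s =>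
    (hP₀ s).1.eq_zero_of_acyclic (removeEdges_path_acyclic s)
  simp only [hP₀] at hμ hb
  have hb₀ := target_removeEdges_empty (by omega) (hμ _) (hb _)
  have hbNash := target_nashProfile (by omega) (hb (nashProfile n))
  have hPay₀ := (hPay fun _ => ∅).eq_removeEdges_path fun i _ _ hib =>
    one_le_sum_removeEdges_empty (by have := Fin.val_ne_of_ne hib; omega)
  have hPayNash := (hPay (nashProfile n)).eq_removeEdges_path fun i _ hik hib =>
    absurd (Fin.ext ((removeEdges_nashProfile_ne_zero_iff.1 hik).1.trans hbNash.symm)) hib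
  refine ⟨⟨hb₀, by rw [hPay₀, liquidity_removeEdges_empty (by omega)]⟩, fun j R => ?_,
    by rw [hPayNash, liquidity_removeEdges_nashProfile (by omega)]⟩
  rw [hPayNash]
  exact assets_deviation_le (by omega) (fun k hk => Function.update_of_ne hk _ _) (hμ _) (hb _)
    (hPay _).1 hbNash
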